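/- Equivalence of untruncated CROP and GMRES (Theorem 4.3): In the linear setting f(x) = b − A·x with A nonsingular, let (x_C^(k), f_C^(k), x̃_C^(k), f̃_C^(k)) be a CROP sequence with no truncation (m_{k+1} = k+1) and least-squares optimal coefficients, and set r^(0) = b − A·x_C^(0). Suppose that for each step j ≤ k the affine hull of {f_C^(0), …, f_C^(j−1), f̃_C^(j)} equals the affine set {b − A·x : x ∈ x_C^(0) + K_j(A, r^(0))}, where K_j(A, r^(0)) = span{r^(0), A·r^(0), …, A^{j−1}·r^(0)}. Then for each j ≤ k the iterate x_C^(j) lies in x_C^(0) + K_j(A, r^(0)) and its residual is minimal over this affine set: ‖b − A·x_C^(j)‖₂ = min{‖b − A·x‖₂ : x ∈ x_C^(0) + K_j(A, r^(0))}; that is, x_C^(j) is a GMRES iterate and f_C^(j) = b − A·x_C^(j) equals the GMRES residual r_G^(j). -/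
import Mathlib

abbrev Euc (n : ℕ) := EuclideanSpace ℝ (Fin n)

/-- A CROP sequence for the residual function `f`, with truncation parameters
`m (k+1) ≥ 1` and coefficient vectors `coef (k+1)` summing to one. -/
structure CROPSeq (n : ℕ) (f : Euc n → Euc n) where
  x : ℕ → Euc n
  fc : ℕ → Euc n
  xt : ℕ → Euc n
  ft : ℕ → Euc n
  m : ℕ → ℕ
  coef : ℕ → ℕ → ℝ
  m_pos : ∀ k, 1 ≤ m (k + 1)
  m_le : ∀ k, m (k + 1) ≤ k + 1
  fc_zero : fc 0 = f (x 0)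
  xt_succ : ∀ k, xt (k + 1) = x k + fc k
  ft_succ : ∀ k, ft (k + 1) = f (xt (k + 1))
  coef_sum : ∀ k, ∑ i ∈ Finset.range (m (k + 1) + 1), coef (k + 1) i = 1
  x_succ : ∀ k, x (k + 1) =
    (∑ i ∈ Finset.range (m (k + 1)), coef (k + 1) i • x (k + 1 - m (k + 1) + i))
      + coef (k + 1) (m (k + 1)) • xt (k + 1)
  fc_succ : ∀ k, fc (k + 1) =
    (∑ i ∈ Finset.range (m (k + 1)), coef (k + 1) i • fc (k + 1 - m (k + 1) + i))
      + coef (k + 1) (m (k + 1)) • ft (k + 1)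

/-- Least-squares optimality of the CROP coefficients. -/
def CROPSeq.Optimal {n : ℕ} {f : Euc n → Euc n} (s : CROPSeq n f) : Prop :=
  ∀ k, ∀ β : ℕ → ℝ, (∑ i ∈ Finset.range (s.m (k + 1) + 1), β i = 1) →
    ‖s.fc (k + 1)‖ ≤
      ‖(∑ i ∈ Finset.range (s.m (k + 1)), β i • s.fc (k + 1 - s.m (k + 1) + i))
        + β (s.m (k + 1)) • s.ft (k + 1)‖

/-- The Krylov subspace `K_j(A, v) = span {v, A v, …, A^(j-1) v}`. -/
def krylov {n : ℕ} (A : Euc n →L[ℝ] Euc n) (v : Euc n) (j : ℕ) :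
    Submodule ℝ (Euc n) :=
  Submodule.span ℝ {w | ∃ i < j, w = (A ^ i) v}

lemma krylov_mono {n : ℕ} (A : Euc n →L[ℝ] Euc n) (v : Euc n) {i j : ℕ} (h : i ≤ j) :
    krylov A v i ≤ krylov A v j :=
  Submodule.span_mono (fun w hw => by obtain ⟨l, hl, he⟩ := hw; exact ⟨l, lt_of_lt_of_le hl h, he⟩)

lemma self_mem_krylov {n : ℕ} (A : Euc n →L[ℝ] Euc n) (v : Euc n) {j : ℕ} (h : 1 ≤ j) :
    v ∈ krylov A v j :=
  Submodule.subset_span ⟨0, h, by simp⟩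

lemma apply_mem_krylov {n : ℕ} (A : Euc n →L[ℝ] Euc n) (v : Euc n) {j : ℕ} {w : Euc n}
    (hw : w ∈ krylov A v j) : A w ∈ krylov A v (j + 1) := by
  induction hw using Submodule.span_induction with
  | mem x hx =>
      obtain ⟨i, hi, rfl⟩ := hx
      exact Submodule.subset_span ⟨i + 1, by omega, by rw [pow_succ']; rfl⟩
  | zero => simp
  | add x y _ _ hx hy => rw [map_add]; exact Submodule.add_mem _ hx hy
  | smul c x _ hx => rw [map_smul]; exact Submodule.smul_mem _ c hx

lemma krylov_zero {n : ℕ} (A : Euc n →L[ℝ] Euc n) (v : Euc n) :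
    krylov A v 0 = ⊥ := by
  rw [krylov]
  convert Submodule.span_empty
  ext w; simp

lemma crop_basic {n : ℕ} (A : Euc n →L[ℝ] Euc n) (b : Euc n)
    (s : CROPSeq n (fun x => b - A x)) (hnt : ∀ k : ℕ, s.m (k + 1) = k + 1) :
    ∀ j : ℕ, s.fc j = b - A (s.x j) ∧ s.x j - s.x 0 ∈ krylov A (b - A (s.x 0)) j := by
  intro j
  induction j using Nat.strong_induction_on with
  | _ j ih =>
    match j with
    | 0 =>
        refine ⟨s.fc_zero, ?_⟩
        simp
    | k + 1 =>
        have hm := hnt k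
        have hx := s.x_succ k
        have hf := s.fc_succ k
        have hcs := s.coef_sum k
        rw [hm] at hx hf hcs
        simp only [Nat.sub_self, Nat.zero_add] at hx hf
        have hcs' : (∑ i ∈ Finset.range (k + 1), s.coef (k + 1) i)
            = 1 - s.coef (k + 1) (k + 1) := by
          rw [Finset.sum_range_succ] at hcs; linarith
        have hft : s.ft (k + 1) = b - A (s.xt (k + 1)) := s.ft_succ k
        have hxt : s.xt (k + 1) = s.x k + s.fc k := s.xt_succ k
        have hfk : s.fc k = b - A (s.x k) := (ih k (by omega)).1
        have h1 : s.fc (k + 1) = ∑ i ∈ Finset.range (k + 1),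
            s.coef (k + 1) i • (b - A (s.x i))
              + s.coef (k + 1) (k + 1) • (b - A (s.xt (k + 1))) := by
          rw [hf, hft]
          congr 1
          refine Finset.sum_congr rfl fun i hi => ?_
          rw [(ih i (Finset.mem_range.mp hi)).1]
        have h2 : s.fc (k + 1) = b - A (s.x (k + 1)) := by
          rw [h1, hx]
          simp only [smul_sub, Finset.sum_sub_distrib, map_add, map_sum, map_smul,
            ← Finset.sum_smul]
          rw [hcs']
          module
        refine ⟨h2, ?_⟩
        have h3 : s.x (k + 1) - s.x 0 = ∑ i ∈ Finset.range (k + 1),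
            s.coef (k + 1) i • (s.x i - s.x 0)
              + s.coef (k + 1) (k + 1) • (s.xt (k + 1) - s.x 0) := by
          rw [hx]
          simp only [smul_sub, Finset.sum_sub_distrib, ← Finset.sum_smul]
          rw [hcs']
          module
        rw [h3]
        refine Submodule.add_mem _ ?_ ?_
        · refine Submodule.sum_mem _ fun i hi => Submodule.smul_mem _ _ ?_
          exact krylov_mono A _ (by have := Finset.mem_range.mp hi; omega)
            (ih i (Finset.mem_range.mp hi)).2
        · refine Submodule.smul_mem _ _ ?_
          have h4 : s.xt (k + 1) - s.x 0
              = (s.x k - s.x 0) + ((b - A (s.x 0)) - A (s.x k - s.x 0)) := by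
            rw [hxt, hfk, map_sub]; abel
          rw [h4]
          exact Submodule.add_mem _
            (krylov_mono A _ (Nat.le_succ k) (ih k (by omega)).2)
            (Submodule.sub_mem _ (self_mem_krylov A _ (by omega))
              (apply_mem_krylov A _ (ih k (by omega)).2))

/-- **Theorem 4.3.** In the linear setting with nonsingular `A`, an untruncated CROP
sequence with least-squares optimal coefficients, whose residual affine hulls coincide
with the images of the affine Krylov spaces, produces the GMRES iterates: `x_C^(j)`
lies in `x_C^(0) + K_j(A, r^(0))` and minimizes the residual norm over that affine
set, and `f_C^(j)` is the GMRES residual `b - A x_C^(j)`. -/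
theorem crop_equiv_gmres {n : ℕ}
    (A : Euc n →L[ℝ] Euc n) (b : Euc n) (hA : Function.Bijective A)
    (s : CROPSeq n (fun x => b - A x))
    (hnt : ∀ k : ℕ, s.m (k + 1) = k + 1) (hopt : s.Optimal) (k : ℕ)
    (haff : ∀ j : ℕ, 1 ≤ j → j ≤ k →
      (affineSpan ℝ ({w | ∃ i < j, w = s.fc i} ∪ {s.ft j}) : Set (Euc n)) =
        {w | ∃ v ∈ krylov A (b - A (s.x 0)) j, w = b - A (s.x 0 + v)}) :
    ∀ j ≤ k,
      (∃ v ∈ krylov A (b - A (s.x 0)) j, s.x j = s.x 0 + v) ∧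
      (∀ x' : Euc n, (∃ v ∈ krylov A (b - A (s.x 0)) j, x' = s.x 0 + v) →
        ‖b - A (s.x j)‖ ≤ ‖b - A x'‖) ∧
      s.fc j = b - A (s.x j) := by
  intro j hj
  have basic := crop_basic A b s hnt
  refine ⟨⟨s.x j - s.x 0, (basic j).2, by abel⟩, ?_, (basic j).1⟩
  rintro x' ⟨v, hv, rfl⟩
  match j, hj with
  | 0, _ =>
      have hv0 : v = 0 := by
        rw [krylov_zero] at hv; simpa using hv
      simp [hv0]
  | k' + 1, hj =>
      set j := k' + 1 with hjdef
      have hmem : b - A (s.x 0 + v) ∈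
          (affineSpan ℝ ({w | ∃ i < j, w = s.fc i} ∪ {s.ft j}) : Set (Euc n)) := by
        rw [haff j (by omega) hj]
        exact ⟨v, hv, rfl⟩
      set g : ℕ → Euc n := fun i => if i < j then s.fc i else s.ft j with hg
      have hset : ({w | ∃ i < j, w = s.fc i} ∪ {s.ft j} : Set (Euc n)) = Set.range g := by
        ext w
        constructor
        · rintro (⟨i, hi, rfl⟩ | rfl)
          · exact ⟨i, by simp [hg, hi]⟩
          · exact ⟨j, by simp [hg]⟩
        · rintro ⟨i, rfl⟩
          by_cases hi : i < j
          · exact Or.inl ⟨i, hi, by simp [hg, hi]⟩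
          · right; simp [hg, hi]
      rw [hset] at hmem
      obtain ⟨t, w, hw1, hwe⟩ := eq_affineCombination_of_mem_affineSpan hmem
      rw [Finset.affineCombination_eq_linear_combination _ _ _ hw1] at hwe
      set β : ℕ → ℝ := fun i =>
        if i < j then (if i ∈ t then w i else 0)
        else ∑ i' ∈ t.filter (fun i' => ¬ i' < j), w i' with hβ
      have hinter : Finset.range j ∩ t = t.filter (fun i => i < j) := by
        ext i; simp [Finset.mem_filter, and_comm]
      have hβsum : ∑ i ∈ Finset.range (j + 1), β i = 1 := by
        rw [Finset.sum_range_succ]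
        have h1 : ∑ i ∈ Finset.range j, β i = ∑ i ∈ t.filter (fun i => i < j), w i := by
          rw [Finset.sum_congr rfl
            (fun i hi => by simp [hβ, Finset.mem_range.mp hi] : ∀ i ∈ Finset.range j,
              β i = if i ∈ t then w i else 0)]
          rw [Finset.sum_ite_mem, hinter]
        have h2 : β j = ∑ i' ∈ t.filter (fun i' => ¬ i' < j), w i' := by
          simp [hβ]
        rw [h1, h2, Finset.sum_filter_add_sum_filter_not, hw1]
      have hkey : (∑ i ∈ Finset.range j, β i • s.fc i) + β j • s.ft j
          = b - A (s.x 0 + v) := by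
        have h1 : ∑ i ∈ Finset.range j, β i • s.fc i
            = ∑ i ∈ t.filter (fun i => i < j), w i • g i := by
          rw [Finset.sum_congr rfl
            (fun i hi => by
              have : i < j := Finset.mem_range.mp hi
              simp [hβ, this, ite_smul, hg] : ∀ i ∈ Finset.range j,
              β i • s.fc i = if i ∈ t then w i • g i else 0)]
          rw [Finset.sum_ite_mem, hinter]
        have h2 : β j • s.ft j = ∑ i ∈ t.filter (fun i' => ¬ i' < j), w i • g i := by
          have : β j = ∑ i' ∈ t.filter (fun i' => ¬ i' < j), w i' := by simp [hβ]
          rw [this, Finset.sum_smul]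
          refine Finset.sum_congr rfl fun i hi => ?_
          have : ¬ i < j := (Finset.mem_filter.mp hi).2
          simp [hg, this]
        rw [h1, h2, Finset.sum_filter_add_sum_filter_not, ← hwe]
      have hle := hopt k' β (by rw [hnt k']; exact hβsum)
      simp only [hnt k', Nat.sub_self, Nat.zero_add] at hle
      rw [hkey] at hle
      calc ‖b - A (s.x j)‖ = ‖s.fc j‖ := by rw [(basic j).1]
        _ ≤ ‖b - A (s.x 0 + v)‖ := hle
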